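/- Suppose A ⊆ ℝ^D is nonempty, compact and convex, M : ℝ^D → ℝ^D is continuous, and there exists a point â in the relative (intrinsic) interior of A with Kâ ≤ l componentwise. If a* is a solution of VI(M, A ∩ C), then there exists λ* ∈ ℝ^n_+ with ⟨λ*, Ka* − l⟩ = 0 such that (a*, λ*) is a solution of VI(W, A × ℝ^n_+). -/

import Mathlib

open scoped RealInnerProductSpace
open Filter Topology

/-- Matrix-vector multiplication, viewed as a map between Euclidean spaces. -/
noncomputable def mulVecE {n D : ℕ} (K : Matrix (Fin n) (Fin D) ℝ)
    (x : EuclideanSpace ℝ (Fin D)) : EuclideanSpace ℝ (Fin n) :=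
  (WithLp.equiv 2 _).symm (K.mulVec ((WithLp.equiv 2 _) x))

lemma mulVecE_apply {n D : ℕ} (K : Matrix (Fin n) (Fin D) ℝ)
    (x : EuclideanSpace ℝ (Fin D)) (j : Fin n) : mulVecE K x j = ∑ i, K j i * x i := rfl

lemma continuous_mulVecE_apply {n D : ℕ} (K : Matrix (Fin n) (Fin D) ℝ) (j : Fin n) :
    Continuous (fun x : EuclideanSpace ℝ (Fin D) => mulVecE K x j) := by
  have : (fun x : EuclideanSpace ℝ (Fin D) => mulVecE K x j)
      = fun x => ∑ i, K j i * x i := rfl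
  rw [this]
  exact continuous_finset_sum _ fun i _ =>
    continuous_const.mul (EuclideanSpace.proj i).continuous

lemma mulVecE_sub {n D : ℕ} (K : Matrix (Fin n) (Fin D) ℝ)
    (x y : EuclideanSpace ℝ (Fin D)) (j : Fin n) :
    mulVecE K (x - y) j = mulVecE K x j - mulVecE K y j := by
  simp [mulVecE_apply, mul_sub, Finset.sum_sub_distrib]

lemma mulVecE_add_smul {n D : ℕ} (K : Matrix (Fin n) (Fin D) ℝ)
    (x y : EuclideanSpace ℝ (Fin D)) (t : ℝ) (j : Fin n) :
    mulVecE K (x + t • y) j = mulVecE K x j + t * mulVecE K y j := by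
  simp [mulVecE_apply, mul_add, Finset.sum_add_distrib, Finset.mul_sum]
  exact Finset.sum_congr rfl fun i _ => by ring

lemma inner_mulVecE {n D : ℕ} (K : Matrix (Fin n) (Fin D) ℝ)
    (x : EuclideanSpace ℝ (Fin D)) (lam : EuclideanSpace ℝ (Fin n)) :
    ⟪lam, mulVecE K x⟫ = ⟪mulVecE K.transpose lam, x⟫ := by
  simp only [PiLp.inner_apply, RCLike.inner_apply, starRingEnd_apply, star_trivial]
  have h1 : ∀ j, mulVecE K x j = ∑ i, K j i * x i := fun _ => rfl
  have h2 : ∀ i, mulVecE K.transpose lam i = ∑ j, K j i * lam j := fun _ => rfl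
  simp only [h1, h2, Finset.mul_sum, Finset.sum_mul]
  rw [Finset.sum_comm]
  exact Finset.sum_congr rfl fun i _ => Finset.sum_congr rfl fun j _ => by ring

lemma inner_eq_sum {m : ℕ} (x y : EuclideanSpace ℝ (Fin m)) : ⟪x, y⟫ = ∑ i, x i * y i := by
  simp [PiLp.inner_apply, RCLike.inner_apply, mul_comm]

lemma max_sq_bound (x h : ℝ) : max (x + h) 0 ^ 2 ≤ max x 0 ^ 2 + 2 * max x 0 * h + h ^ 2 := by
  have key : max (x + h) 0 ^ 2 ≤ (max x 0 + h) ^ 2 := by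
    rcases le_total (x + h) 0 with hc | hc
    · rw [max_eq_right hc]; simpa using sq_nonneg (max x 0 + h)
    · rw [max_eq_left hc]
      have h1 : x + h ≤ max x 0 + h := by have := le_max_left x 0; linarith
      have h2 : (0:ℝ) ≤ x + h := hc
      nlinarith
  nlinarith [key]

lemma nonneg_of_forall_small (G B : ℝ) (h : ∀ t : ℝ, 0 < t → t ≤ 1 → 0 ≤ G + t * B) : 0 ≤ G := by
  by_contra hG
  push_neg at hG
  rcases le_or_gt B 0 with hB | hB
  · have := h 1 one_pos le_rfl; nlinarith
  · have ht : 0 < min 1 (-G / (2 * B)) := lt_min one_pos (div_pos (by linarith) (by linarith))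
    have := h _ ht (min_le_left _ _)
    have h2 : min 1 (-G / (2 * B)) * B ≤ (-G / (2 * B)) * B :=
      mul_le_mul_of_nonneg_right (min_le_right _ _) hB.le
    have h3 : (-G / (2 * B)) * B = -G / 2 := by field_simp
    nlinarith

lemma mulVecE_add {n D : ℕ} (K : Matrix (Fin n) (Fin D) ℝ)
    (x y : EuclideanSpace ℝ (Fin D)) (j : Fin n) :
    mulVecE K (x + y) j = mulVecE K x j + mulVecE K y j := by
  simp [mulVecE_apply, mul_add, Finset.sum_add_distrib]

section Cone
variable {ι : Type*} [Fintype ι] [DecidableEq ι] {E : Type*} [AddCommGroup E] [Module ℝ E]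

lemma cone_caratheodory (v : ι → E) (s : Finset ι) :
    ∀ (μ : ι → ℝ), (∀ i, 0 ≤ μ i) → (∀ i ∉ s, μ i = 0) →
    ∃ t, t ⊆ s ∧ (LinearIndependent ℝ (fun i : t => v i)) ∧
      ∃ ν : ι → ℝ, (∀ i, 0 ≤ ν i) ∧ (∀ i ∉ t, ν i = 0) ∧ ∑ i, ν i • v i = ∑ i, μ i • v i := by
  induction s using Finset.strongInduction with
  | _ s ih =>
    intro μ hμ hsupp
    by_cases hLI : LinearIndependent ℝ (fun i : s => v i)
    · exact ⟨s, le_refl _, hLI, μ, hμ, hsupp, rfl⟩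
    · obtain ⟨g, hg0, i1, hgi1⟩ := Fintype.not_linearIndependent_iff.1 hLI
      set gg : ι → ℝ := fun i => if h : i ∈ s then g ⟨i, h⟩ else 0 with hgg
      have hggs : ∀ i (h : i ∈ s), gg i = g ⟨i, h⟩ := fun i h => dif_pos h
      have hggout : ∀ i ∉ s, gg i = 0 := fun i hi => dif_neg hi
      have hggsum : ∑ i, gg i • v i = 0 := by
        rw [← Finset.sum_subset s.subset_univ (fun i _ hi => by
          rw [hggout i hi, zero_smul])]
        rw [← Finset.sum_attach s (fun i => gg i • v i), ← hg0]
        exact Finset.sum_congr rfl fun i _ => by rw [hggs i i.2]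
      have hexM : ∀ (gg : ι → ℝ), (∑ i, gg i • v i = 0) → (∃ i ∈ s, 0 < gg i) →
          (∀ i ∉ s, gg i = 0) →
          ∃ t, t ⊆ s ∧ (LinearIndependent ℝ (fun i : t => v i)) ∧
          ∃ ν : ι → ℝ, (∀ i, 0 ≤ ν i) ∧ (∀ i ∉ t, ν i = 0) ∧
            ∑ i, ν i • v i = ∑ i, μ i • v i := by
        intro gg hsum hex hout
        obtain ⟨i0, hi0T, hi0min⟩ := Finset.exists_min_image (s.filter (fun i => 0 < gg i))
          (fun i => μ i / gg i)
          (by obtain ⟨i, hi, hpos⟩ := hex; exact ⟨i, Finset.mem_filter.2 ⟨hi, hpos⟩⟩)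
        obtain ⟨hi0s, hi0pos⟩ := Finset.mem_filter.1 hi0T
        set r := μ i0 / gg i0 with hr
        have hr0 : 0 ≤ r := div_nonneg (hμ i0) hi0pos.le
        set ν : ι → ℝ := fun i => μ i - r * gg i with hν
        have hν0 : ∀ i, 0 ≤ ν i := by
          intro i
          show 0 ≤ μ i - r * gg i
          rcases lt_or_ge 0 (gg i) with hpos | hneg
          · have his : i ∈ s := by
              by_contra his
              rw [hout i his] at hpos; exact lt_irrefl 0 hpos
            have hle := hi0min i (Finset.mem_filter.2 ⟨his, hpos⟩)
            have h2 := mul_le_mul_of_nonneg_right hle hpos.le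
            rw [div_mul_cancel₀ _ hpos.ne'] at h2
            linarith
          · have h3 : r * gg i ≤ 0 := mul_nonpos_of_nonneg_of_nonpos hr0 hneg
            have := hμ i; linarith
        have hνi0 : ν i0 = 0 := by
          show μ i0 - r * gg i0 = 0
          rw [hr, div_mul_cancel₀ _ hi0pos.ne', sub_self]
        have hνsupp : ∀ i ∉ s.erase i0, ν i = 0 := by
          intro i hi
          by_cases his : i ∈ s
          · have heq : i = i0 := by
              by_contra hne
              exact hi (Finset.mem_erase.2 ⟨hne, his⟩)
            rw [heq]; exact hνi0
          · show μ i - r * gg i = 0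
            rw [hsupp i his, hout i his]; ring
        have hνsum : ∑ i, ν i • v i = ∑ i, μ i • v i := by
          show ∑ i, (μ i - r * gg i) • v i = ∑ i, μ i • v i
          simp only [sub_smul, Finset.sum_sub_distrib, mul_smul]
          rw [← Finset.smul_sum, hsum, smul_zero, sub_zero]
        obtain ⟨t, hts, hLIt, ω, hω0, hωsupp, hωsum⟩ :=
          ih (s.erase i0) (Finset.erase_ssubset hi0s) ν hν0 hνsupp
        exact ⟨t, hts.trans (Finset.erase_subset _ _), hLIt, ω, hω0, hωsupp, hωsum.trans hνsum⟩
      rcases Classical.em (∃ i ∈ s, 0 < gg i) with hex | hnex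
      · exact hexM gg hggsum hex hggout
      · push_neg at hnex
        refine hexM (fun i => -gg i) ?_ ?_ (fun i hi => by show -gg i = 0; rw [hggout i hi, neg_zero])
        · simp only [neg_smul, Finset.sum_neg_distrib, hggsum, neg_zero]
        · refine ⟨i1, i1.2, ?_⟩
          have h1 := hnex i1 i1.2
          have h2 : gg (i1 : ι) ≠ 0 := by rw [hggs i1 i1.2]; exact hgi1
          have h3 : gg (i1 : ι) < 0 := lt_of_le_of_ne h1 h2
          show 0 < -gg (i1 : ι)
          linarith
end Cone
section ConeClosed
variable {ι : Type*} [Fintype ι] [DecidableEq ι] {E : Type*} [NormedAddCommGroup E]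
    [NormedSpace ℝ E] [FiniteDimensional ℝ E]

lemma isClosed_coneSet (v : ι → E) (s : Finset ι) :
    IsClosed {x : E | ∃ μ : ι → ℝ, (∀ i, 0 ≤ μ i) ∧ (∀ i ∉ s, μ i = 0) ∧ ∑ i, μ i • v i = x} := by
  classical
  let L : (t : Finset ι) → ((↥t → ℝ) →ₗ[ℝ] E) :=
    fun t => ∑ i : ↥t, (LinearMap.proj i).smulRight (v ↑i)
  have hLapp : ∀ (t : Finset ι) (ν : ↥t → ℝ), L t ν = ∑ i : ↥t, ν i • v ↑i := by
    intro t ν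
    simp [L, LinearMap.sum_apply, LinearMap.smulRight_apply, LinearMap.proj_apply]
  have hset : {x : E | ∃ μ : ι → ℝ, (∀ i, 0 ≤ μ i) ∧ (∀ i ∉ s, μ i = 0) ∧ ∑ i, μ i • v i = x}
      = ⋃ t ∈ {t : Finset ι | t ⊆ s ∧ LinearIndependent ℝ (fun i : t => v i)},
        (L t) '' {ν | ∀ i, 0 ≤ ν i} := by
    ext x
    simp only [Set.mem_setOf_eq, Set.mem_iUnion, Set.mem_image, exists_prop]
    constructor
    · rintro ⟨μ, h0, hsupp, hsum⟩
      obtain ⟨t, hts, hLI, ν, hν0, hνsupp, hνsum⟩ := cone_caratheodory v s μ h0 hsupp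
      refine ⟨t, ⟨hts, hLI⟩, fun i => ν ↑i, fun i => hν0 ↑i, ?_⟩
      rw [hLapp]
      rw [Finset.sum_coe_sort t (fun i => ν i • v i)]
      rw [Finset.sum_subset t.subset_univ (fun i _ hit => by rw [hνsupp i hit, zero_smul])]
      rw [hνsum, hsum]
    · rintro ⟨t, ⟨hts, hLI⟩, ν, hν0, hνx⟩
      refine ⟨fun i => if h : i ∈ t then ν ⟨i, h⟩ else 0, ?_, ?_, ?_⟩
      · intro i; dsimp only; by_cases h : i ∈ t
        · rw [dif_pos h]; exact hν0 _
        · rw [dif_neg h]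
      · intro i hi; dsimp only; rw [dif_neg (fun hit => hi (hts hit))]
      · rw [← Finset.sum_subset t.subset_univ (fun i _ hit => by
          show (if h : i ∈ t then ν ⟨i, h⟩ else 0) • v i = 0
          rw [dif_neg hit, zero_smul])]
        rw [← Finset.sum_coe_sort t (fun i => (if h : i ∈ t then ν ⟨i, h⟩ else 0) • v i)]
        rw [← hνx, hLapp]
        exact Finset.sum_congr rfl fun i _ => by
          show (if h : (i:ι) ∈ t then ν ⟨i, h⟩ else 0) • v ↑i = ν i • v ↑i
          rw [dif_pos i.2]
  rw [hset]
  refine (Set.toFinite _).isClosed_biUnion ?_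
  rintro t ⟨-, hLI⟩
  have hker : LinearMap.ker (L t) = ⊥ := by
    rw [LinearMap.ker_eq_bot']
    intro ν hν
    rw [hLapp] at hν
    exact funext (Fintype.linearIndependent_iff.1 hLI ν hν)
  have hpos : IsClosed {ν : ↥t → ℝ | ∀ i, 0 ≤ ν i} := by
    have : {ν : ↥t → ℝ | ∀ i, 0 ≤ ν i} = ⋂ i, {ν | 0 ≤ ν i} := by
      ext; simp [Set.mem_iInter]
    rw [this]
    exact isClosed_iInter fun i => isClosed_le continuous_const (continuous_apply i)
  exact ((L t).isClosedEmbedding_of_injective hker).isClosedMap _ hpos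
end ConeClosed
lemma relint_ball {E : Type*} [NormedAddCommGroup E] [NormedSpace ℝ E]
    {A : Set E} {x : E} (hx : x ∈ intrinsicInterior ℝ A) :
    ∃ ε > 0, ∀ d ∈ (affineSpan ℝ A).direction, ‖d‖ < ε → x + d ∈ A := by
  obtain ⟨y, hy, hyx⟩ := mem_intrinsicInterior.1 hx
  rw [mem_interior_iff_mem_nhds, Metric.mem_nhds_iff] at hy
  obtain ⟨ε, hε, hball⟩ := hy
  refine ⟨ε, hε, fun d hd hdn => ?_⟩
  have hxA : x ∈ (affineSpan ℝ A : Set E) := by rw [← hyx]; exact y.2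
  have hzmem : x + d ∈ affineSpan ℝ A := by
    have := AffineSubspace.vadd_mem_of_mem_direction hd hxA
    rwa [vadd_eq_add, add_comm] at this
  have : (⟨x + d, hzmem⟩ : affineSpan ℝ A) ∈ Metric.ball y ε := by
    rw [Metric.mem_ball, Subtype.dist_eq]
    simp only [hyx]
    rw [dist_eq_norm]
    simpa using hdn
  exact hball this
lemma foc_lemma {D n : ℕ} {A : Set (EuclideanSpace ℝ (Fin D))} (hAconv : Convex ℝ A)
    (K : Matrix (Fin n) (Fin D) ℝ) (l : EuclideanSpace ℝ (Fin n))
    (c astar : EuclideanSpace ℝ (Fin D)) (k1 : ℝ) (hk1 : 0 < k1)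
    (x : EuclideanSpace ℝ (Fin D)) (hx : x ∈ A)
    (hmin : IsMinOn (fun a => ⟪c, a - astar⟫ +
      k1 * (∑ j, max (mulVecE K a j - l j) 0 ^ 2) + ‖a - astar‖ ^ 2) A x) :
    ∀ a ∈ A, 0 ≤ ⟪c, a - x⟫ +
      (∑ j, (2 * k1 * max (mulVecE K x j - l j) 0) * mulVecE K (a - x) j) +
      2 * ⟪x - astar, a - x⟫ := by
  intro a ha
  set d := a - x with hd
  set G := ⟪c, d⟫ + (∑ j, (2 * k1 * max (mulVecE K x j - l j) 0) * mulVecE K d j)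
    + 2 * ⟪x - astar, d⟫ with hG
  set B := k1 * (∑ j, mulVecE K d j ^ 2) + ‖d‖ ^ 2 with hB
  refine nonneg_of_forall_small G B ?_
  intro t ht0 ht1
  have hmem : x + t • d ∈ A := by
    have h2 : x + t • d = (1 - t) • x + t • a := by
      rw [hd]; rw [smul_sub]; module
    rw [h2]; exact hAconv hx ha (by linarith) (by linarith) (by ring)
  have hle := hmin hmem
  simp only [Set.mem_setOf_eq] at hle
  -- expand each piece of F (x + t • d)
  have e1 : ⟪c, x + t • d - astar⟫ = ⟪c, x - astar⟫ + t * ⟪c, d⟫ := by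
    rw [show x + t • d - astar = (x - astar) + t • d by abel]
    rw [inner_add_right, real_inner_smul_right]
  have e2 : ‖x + t • d - astar‖ ^ 2 = ‖x - astar‖ ^ 2 + 2 * (t * ⟪x - astar, d⟫)
      + t ^ 2 * ‖d‖ ^ 2 := by
    rw [show x + t • d - astar = (x - astar) + t • d by abel]
    rw [norm_add_sq_real, real_inner_smul_right, norm_smul]
    simp [mul_pow, abs_of_pos ht0]
  have e3 : ∑ j, max (mulVecE K (x + t • d) j - l j) 0 ^ 2
      ≤ (∑ j, max (mulVecE K x j - l j) 0 ^ 2)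
        + t * (∑ j, 2 * max (mulVecE K x j - l j) 0 * mulVecE K d j)
        + t ^ 2 * (∑ j, mulVecE K d j ^ 2) := by
    rw [Finset.mul_sum, Finset.mul_sum, ← Finset.sum_add_distrib, ← Finset.sum_add_distrib]
    refine Finset.sum_le_sum fun j _ => ?_
    have := max_sq_bound (mulVecE K x j - l j) (t * mulVecE K d j)
    rw [mulVecE_add_smul]
    calc max (mulVecE K x j + t * mulVecE K d j - l j) 0 ^ 2
        = max ((mulVecE K x j - l j) + t * mulVecE K d j) 0 ^ 2 := by ring_nf
      _ ≤ _ := by nlinarith [this]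
  -- combine
  have hsum : (∑ j, (2 * k1 * max (mulVecE K x j - l j) 0) * mulVecE K d j)
      = k1 * (∑ j, 2 * max (mulVecE K x j - l j) 0 * mulVecE K d j) := by
    rw [Finset.mul_sum]; exact Finset.sum_congr rfl fun j _ => by ring
  rw [e1, e2] at hle
  have key := mul_le_mul_of_nonneg_left e3 hk1.le
  have h0 : 0 ≤ t * G + t ^ 2 * B := by
    rw [hG, hB, hsum]
    nlinarith [hle, key]
  have h5 : 0 ≤ t * (G + t * B) := by nlinarith [h0]
  have := (mul_nonneg_iff_of_pos_left ht0).1 h5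
  linarith
set_option maxHeartbeats 2000000 in
theorem key_lemma (D n : ℕ)
    (A : Set (EuclideanSpace ℝ (Fin D))) (hAne : A.Nonempty)
    (hAcomp : IsCompact A) (hAconv : Convex ℝ A)
    (K : Matrix (Fin n) (Fin D) ℝ) (l : EuclideanSpace ℝ (Fin n))
    (c : EuclideanSpace ℝ (Fin D))
    (ahat : EuclideanSpace ℝ (Fin D)) (hahatA : ahat ∈ A)
    (hball : ∃ ε > 0, ∀ d ∈ (affineSpan ℝ A).direction, ‖d‖ < ε → ahat + d ∈ A)
    (hahatC : ∀ j, mulVecE K ahat j ≤ l j)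
    (astar : EuclideanSpace ℝ (Fin D)) (hastarA : astar ∈ A)
    (hastarC : ∀ j, mulVecE K astar j ≤ l j)
    (hVI : ∀ a ∈ A, (∀ j, mulVecE K a j ≤ l j) → 0 ≤ ⟪c, a - astar⟫) :
    ∃ lstar : EuclideanSpace ℝ (Fin n), (∀ j, 0 ≤ lstar j) ∧
      (∀ j, mulVecE K astar j < l j → lstar j = 0) ∧
      (∀ a ∈ A, 0 ≤ ⟪c + mulVecE K.transpose lstar, a - astar⟫) := by
  classical
  obtain ⟨ε, hε, hb⟩ := hball
  set V := (affineSpan ℝ A).direction with hV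
  -- minimizers of the penalized functionals
  have hFcont : ∀ k : ℕ, Continuous (fun a : EuclideanSpace ℝ (Fin D) =>
      ⟪c, a - astar⟫ + ((k : ℝ) + 1) * (∑ j, max (mulVecE K a j - l j) 0 ^ 2)
        + ‖a - astar‖ ^ 2) := by
    intro k
    refine Continuous.add (Continuous.add ?_ ?_) ?_
    · exact continuous_const.inner (continuous_id.sub continuous_const)
    · exact continuous_const.mul (continuous_finset_sum _ fun j _ =>
        (((continuous_mulVecE_apply K j).sub continuous_const).max continuous_const).pow 2)
    · exact ((continuous_id.sub continuous_const).norm).pow 2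
  have hmin : ∀ k : ℕ, ∃ x ∈ A, IsMinOn (fun a : EuclideanSpace ℝ (Fin D) =>
      ⟪c, a - astar⟫ + ((k : ℝ) + 1) * (∑ j, max (mulVecE K a j - l j) 0 ^ 2)
        + ‖a - astar‖ ^ 2) A x :=
    fun k => hAcomp.exists_isMinOn hAne (hFcont k).continuousOn
  choose aa haaA haamin using hmin
  -- radius bound
  obtain ⟨Ra, hRa0, hRa⟩ : ∃ R : ℝ, 0 ≤ R ∧ ∀ a ∈ A, ‖a - astar‖ ≤ R := by
    obtain ⟨r, hr⟩ := hAcomp.isBounded.subset_closedBall astar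
    exact ⟨max r 0, le_max_right _ _, fun a ha => by
      have := hr ha
      rw [Metric.mem_closedBall, dist_eq_norm] at this
      exact this.trans (le_max_left _ _)⟩
  -- value at astar is 0, so min value ≤ 0
  have hmax0 : ∀ j, max (mulVecE K astar j - l j) 0 = 0 :=
    fun j => max_eq_right (sub_nonpos.2 (hastarC j))
  have hFk0 : ∀ k : ℕ, ⟪c, aa k - astar⟫
      + ((k : ℝ) + 1) * (∑ j, max (mulVecE K (aa k) j - l j) 0 ^ 2)
      + ‖aa k - astar‖ ^ 2 ≤ 0 := by
    intro k
    have := haamin k hastarA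
    simpa [hmax0] using this
  have hgnn : ∀ (x : EuclideanSpace ℝ (Fin D)),
      0 ≤ ∑ j, max (mulVecE K x j - l j) 0 ^ 2 :=
    fun x => Finset.sum_nonneg fun j _ => by positivity
  have hk1pos : ∀ k : ℕ, (0:ℝ) < (k : ℝ) + 1 := fun k => by positivity
  have hbd1 : ∀ k, ⟪c, aa k - astar⟫ + ‖aa k - astar‖ ^ 2 ≤ 0 := by
    intro k
    have h1 := hFk0 k
    have h2 := mul_nonneg (hk1pos k).le (hgnn (aa k))
    linarith
  have hinnlow : ∀ k, -(‖c‖ * Ra) ≤ ⟪c, aa k - astar⟫ := by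
    intro k
    have h1 := abs_real_inner_le_norm c (aa k - astar)
    have h2 := hRa (aa k) (haaA k)
    have h3 : ‖c‖ * ‖aa k - astar‖ ≤ ‖c‖ * Ra :=
      mul_le_mul_of_nonneg_left h2 (norm_nonneg c)
    have := neg_abs_le (⟪c, aa k - astar⟫)
    linarith
  have hbd2 : ∀ k : ℕ, ((k : ℝ) + 1) * (∑ j, max (mulVecE K (aa k) j - l j) 0 ^ 2) ≤ ‖c‖ * Ra := by
    intro k
    have h1 := hFk0 k
    have h2 := hinnlow k
    nlinarith [sq_nonneg ‖aa k - astar‖]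
  -- the multipliers
  set lam : ℕ → Fin n → ℝ :=
    fun k j => 2 * ((k : ℝ) + 1) * max (mulVecE K (aa k) j - l j) 0 with hlam
  have hlam0 : ∀ k j, 0 ≤ lam k j := by
    intro k j
    have := le_max_right (mulVecE K (aa k) j - l j) 0
    have := hk1pos k
    rw [hlam]
    positivity
  -- FOC
  have hFOC : ∀ k, ∀ a ∈ A, 0 ≤ ⟪c, a - aa k⟫ +
      (∑ j, lam k j * mulVecE K (a - aa k) j) + 2 * ⟪aa k - astar, a - aa k⟫ :=
    fun k => foc_lemma hAconv K l c astar _ (hk1pos k) (aa k) (haaA k) (haamin k)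
  -- direction membership
  have hdirmem : ∀ a ∈ A, ∀ b ∈ A, a - b ∈ V := by
    intro a ha b hb
    have := AffineSubspace.vsub_mem_direction (subset_affineSpan ℝ A ha) (subset_affineSpan ℝ A hb)
    simpa using this
  -- projected generators
  set u : Fin n → EuclideanSpace ℝ (Fin D) :=
    fun j => (V.orthogonalProjectionOnto (mulVecE K.transpose (EuclideanSpace.single j 1)) :
      EuclideanSpace ℝ (Fin D)) with hu
  have humem : ∀ j, u j ∈ V := fun j => SetLike.coe_mem _
  have hprojinner : ∀ (μ : Fin n → ℝ) (d : EuclideanSpace ℝ (Fin D)), d ∈ V →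
      ⟪∑ j, μ j • u j, d⟫ = ∑ j, μ j * mulVecE K d j := by
    intro μ d hd
    rw [sum_inner]
    refine Finset.sum_congr rfl fun j _ => ?_
    rw [real_inner_smul_left]
    congr 1
    have h1 : ⟪u j, d⟫ = ⟪mulVecE K.transpose (EuclideanSpace.single j 1), d⟫ := by
      rw [hu]
      have h2 : ⟪mulVecE K.transpose (EuclideanSpace.single j 1) -
          ((V.orthogonalProjectionOnto (mulVecE K.transpose (EuclideanSpace.single j 1)) :
            EuclideanSpace ℝ (Fin D))), d⟫ = 0 := Submodule.starProjection_inner_eq_zero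
        (mulVecE K.transpose (EuclideanSpace.single j 1)) d hd
      have := inner_sub_left (𝕜 := ℝ) (mulVecE K.transpose (EuclideanSpace.single j 1))
        ((V.orthogonalProjectionOnto (mulVecE K.transpose (EuclideanSpace.single j 1)) :
          EuclideanSpace ℝ (Fin D))) d
      rw [h2] at this
      linarith [this]
    rw [h1, ← inner_mulVecE K d (EuclideanSpace.single j 1), inner_eq_sum]
    rw [Finset.sum_eq_single j]
    · simp [EuclideanSpace.single_apply]
    · intro i _ hij
      simp [EuclideanSpace.single_apply, hij]
    · intro h; exact absurd (Finset.mem_univ j) h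
  set Wv : ℕ → EuclideanSpace ℝ (Fin D) := fun k => ∑ j, lam k j • u j with hWv
  have hWmem : ∀ k, Wv k ∈ V := fun k => Submodule.sum_smul_mem V _ (fun j _ => humem j)
  -- nonpositivity of the cross terms
  have hcross : ∀ k, ∑ j, lam k j * mulVecE K (ahat - aa k) j ≤ 0 := by
    intro k
    refine Finset.sum_nonpos fun j _ => ?_
    rw [mulVecE_sub]
    have h1 : mulVecE K ahat j - l j ≤ 0 := sub_nonpos.2 (hahatC j)
    have h2 : 0 ≤ max (mulVecE K (aa k) j - l j) 0 := le_max_right _ _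
    have h3 : max (mulVecE K (aa k) j - l j) 0 * (mulVecE K (aa k) j - l j) ≥ 0 := by
      rcases le_total (mulVecE K (aa k) j - l j) 0 with h | h
      · rw [max_eq_right h]; simp
      · rw [max_eq_left h]; positivity
    have hke := (hk1pos k).le
    have hexp : mulVecE K ahat j - mulVecE K (aa k) j
        = (mulVecE K ahat j - l j) - (mulVecE K (aa k) j - l j) := by ring
    simp only [hlam]
    rw [hexp]
    have t1 : 0 ≤ 2 * ((k:ℝ) + 1) * (max (mulVecE K (aa k) j - l j) 0 * (mulVecE K (aa k) j - l j)) :=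
      mul_nonneg (by positivity) h3
    have t2 : 2 * ((k:ℝ) + 1) * (max (mulVecE K (aa k) j - l j) 0 * (mulVecE K ahat j - l j)) ≤ 0 :=
      mul_nonpos_of_nonneg_of_nonpos (by positivity) (mul_nonpos_of_nonneg_of_nonpos h2 h1)
    nlinarith [t1, t2]
  -- norm bound on Wv
  set R0 : ℝ := (‖c‖ + 2 * Ra) * (‖ahat - astar‖ + Ra + ε) with hR0
  have hR0nn : 0 ≤ R0 := by positivity
  set RW : ℝ := 2 * R0 / ε with hRW
  have hWbound : ∀ k, ‖Wv k‖ ≤ RW := by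
    intro k
    rcases eq_or_ne (Wv k) 0 with h0 | h0
    · rw [h0, norm_zero, hRW]; positivity
    · have hWn : 0 < ‖Wv k‖ := norm_pos_iff.2 h0
      set d : EuclideanSpace ℝ (Fin D) := -((ε / 2 / ‖Wv k‖) • Wv k) with hd
      have hdV : d ∈ V := Submodule.neg_mem _ (Submodule.smul_mem _ _ (hWmem k))
      have hdnorm : ‖d‖ = ε / 2 := by
        rw [hd, norm_neg, norm_smul, Real.norm_eq_abs, abs_of_pos (by positivity)]
        field_simp
      have hdlt : ‖d‖ < ε := by rw [hdnorm]; linarith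
      have hamem : ahat + d ∈ A := hb d hdV hdlt
      have hfoc := hFOC k (ahat + d) hamem
      have hsplit : ∀ j, mulVecE K (ahat + d - aa k) j
          = mulVecE K (ahat - aa k) j + mulVecE K d j := by
        intro j
        rw [show ahat + d - aa k = (ahat - aa k) + d by abel, mulVecE_add]
      have hsum : ∑ j, lam k j * mulVecE K (ahat + d - aa k) j
          = (∑ j, lam k j * mulVecE K (ahat - aa k) j) + ∑ j, lam k j * mulVecE K d j := by
        rw [← Finset.sum_add_distrib]
        exact Finset.sum_congr rfl fun j _ => by rw [hsplit]; ring
      have hinnerW : ∑ j, lam k j * mulVecE K d j = ⟪Wv k, d⟫ := by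
        have := hprojinner (lam k) d hdV
        simp only [hWv]
        exact this.symm
      have hWd : ⟪Wv k, d⟫ = -(ε / 2 * ‖Wv k‖) := by
        rw [hd, inner_neg_right, real_inner_smul_right, real_inner_self_eq_norm_sq]
        field_simp
      have hy : ‖ahat + d - aa k‖ ≤ ‖ahat - astar‖ + Ra + ε := by
        rw [show ahat + d - aa k = (ahat - astar) + (astar - aa k) + d by abel]
        refine (norm_add₃_le).trans ?_
        have h1 : ‖astar - aa k‖ ≤ Ra := by rw [norm_sub_rev]; exact hRa _ (haaA k)
        have h2 : ‖d‖ ≤ ε := hdlt.le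
        linarith
      have hyn : (0:ℝ) ≤ ‖ahat + d - aa k‖ := norm_nonneg _
      have hb1 : ⟪c, ahat + d - aa k⟫ ≤ ‖c‖ * (‖ahat - astar‖ + Ra + ε) :=
        (real_inner_le_norm _ _).trans (mul_le_mul_of_nonneg_left hy (norm_nonneg c))
      have hb2 : ⟪aa k - astar, ahat + d - aa k⟫ ≤ Ra * (‖ahat - astar‖ + Ra + ε) := by
        refine (real_inner_le_norm _ _).trans ?_
        exact mul_le_mul (hRa _ (haaA k)) hy hyn hRa0
      have hcr := hcross k
      rw [hsum, hinnerW, hWd] at hfoc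
      have hfin : ε / 2 * ‖Wv k‖ ≤ R0 := by rw [hR0]; nlinarith [hfoc, hb1, hb2, hcr]
      rw [hRW, le_div_iff₀ hε]
      linarith [hfin]
  -- compactness and subsequence
  have hprodcomp : IsCompact (A ×ˢ Metric.closedBall (0 : EuclideanSpace ℝ (Fin D)) RW) :=
    hAcomp.prod (isCompact_closedBall _ _)
  have hzmem : ∀ k, ((aa k, Wv k) : EuclideanSpace ℝ (Fin D) × EuclideanSpace ℝ (Fin D))
      ∈ A ×ˢ Metric.closedBall 0 RW := by
    intro k
    refine Set.mem_prod.2 ⟨haaA k, ?_⟩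
    rw [Metric.mem_closedBall, dist_zero_right]
    exact hWbound k
  obtain ⟨p, hpmem, φ, hφ, hconv⟩ := hprodcomp.tendsto_subseq hzmem
  obtain ⟨abar, wstar⟩ := p
  have haaconv : Tendsto (fun i => aa (φ i)) atTop (𝓝 abar) :=
    (continuous_fst.tendsto _).comp hconv
  have hWconv : Tendsto (fun i => Wv (φ i)) atTop (𝓝 wstar) :=
    (continuous_snd.tendsto _).comp hconv
  have habarA : abar ∈ A := hpmem.1
  -- abar is feasible
  have hfeas : ∀ j, mulVecE K abar j ≤ l j := by
    intro j
    have hcont : Continuous fun x : EuclideanSpace ℝ (Fin D) =>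
        max (mulVecE K x j - l j) 0 ^ 2 :=
      (((continuous_mulVecE_apply K j).sub continuous_const).max continuous_const).pow 2
    have hlim1 : Tendsto (fun i => max (mulVecE K (aa (φ i)) j - l j) 0 ^ 2) atTop
        (𝓝 (max (mulVecE K abar j - l j) 0 ^ 2)) := (hcont.tendsto _).comp haaconv
    have hub : ∀ i, max (mulVecE K (aa (φ i)) j - l j) 0 ^ 2 ≤ (‖c‖ * Ra) / ((φ i : ℝ) + 1) := by
      intro i
      have h1 := hbd2 (φ i)
      have h2 : max (mulVecE K (aa (φ i)) j - l j) 0 ^ 2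
          ≤ ∑ j', max (mulVecE K (aa (φ i)) j' - l j') 0 ^ 2 :=
        Finset.single_le_sum (f := fun j' => max (mulVecE K (aa (φ i)) j' - l j') 0 ^ 2)
          (fun j' _ => by positivity) (Finset.mem_univ j)
      rw [le_div_iff₀ (hk1pos (φ i))]
      nlinarith [h1, h2, hk1pos (φ i)]
    have hlim2 : Tendsto (fun i => (‖c‖ * Ra) / ((φ i : ℝ) + 1)) atTop (𝓝 0) := by
      apply Tendsto.div_atTop tendsto_const_nhds
      have h3 : Tendsto (fun i => (φ i : ℝ)) atTop atTop :=
        tendsto_natCast_atTop_atTop.comp hφ.tendsto_atTop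
      exact tendsto_atTop_add_const_right _ 1 h3
    have hle0 : max (mulVecE K abar j - l j) 0 ^ 2 ≤ 0 :=
      le_of_tendsto_of_tendsto' hlim1 hlim2 hub
    have h4 : max (mulVecE K abar j - l j) 0 = 0 := by
      nlinarith [le_max_right (mulVecE K abar j - l j) (0:ℝ), hle0]
    have h5 := le_max_left (mulVecE K abar j - l j) (0:ℝ)
    rw [h4] at h5
    linarith
  -- abar = astar
  have habar : abar = astar := by
    have hcont : Continuous fun x : EuclideanSpace ℝ (Fin D) =>
        ⟪c, x - astar⟫ + ‖x - astar‖ ^ 2 :=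
      (continuous_const.inner (continuous_id.sub continuous_const)).add
        (((continuous_id.sub continuous_const).norm).pow 2)
    have hlim : Tendsto (fun i => ⟪c, aa (φ i) - astar⟫ + ‖aa (φ i) - astar‖ ^ 2) atTop
        (𝓝 (⟪c, abar - astar⟫ + ‖abar - astar‖ ^ 2)) := (hcont.tendsto _).comp haaconv
    have h1 : ⟪c, abar - astar⟫ + ‖abar - astar‖ ^ 2 ≤ 0 :=
      le_of_tendsto hlim (Eventually.of_forall fun i => hbd1 (φ i))
    have h2 := hVI abar habarA hfeas
    have h3 : ‖abar - astar‖ ^ 2 ≤ 0 := by linarith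
    have h4 : ‖abar - astar‖ = 0 := by nlinarith [norm_nonneg (abar - astar)]
    rwa [norm_sub_eq_zero_iff] at h4
  rw [habar] at haaconv
  -- eventual support condition
  have hevsupp : ∀ᶠ i in atTop, ∀ j, ¬(mulVecE K astar j = l j) → lam (φ i) j = 0 := by
    rw [eventually_all]
    intro j
    by_cases hj : mulVecE K astar j = l j
    · exact Eventually.of_forall fun i hcon => absurd hj hcon
    · have hlt : mulVecE K astar j < l j := lt_of_le_of_ne (hastarC j) hj
      have hcoord : Tendsto (fun i => mulVecE K (aa (φ i)) j) atTop (𝓝 (mulVecE K astar j)) :=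
        ((continuous_mulVecE_apply K j).tendsto _).comp haaconv
      filter_upwards [hcoord.eventually_lt_const hlt] with i hi
      intro _
      simp only [hlam]
      rw [max_eq_right (by linarith), mul_zero]
  -- cone membership of the limit
  set Jf : Finset (Fin n) := Finset.univ.filter (fun j => mulVecE K astar j = l j) with hJf
  have hclosed := isClosed_coneSet u Jf
  have hWcone : ∀ᶠ i in atTop, Wv (φ i) ∈
      {x : EuclideanSpace ℝ (Fin D) | ∃ μ : Fin n → ℝ, (∀ i, 0 ≤ μ i) ∧
        (∀ i ∉ Jf, μ i = 0) ∧ ∑ i, μ i • u i = x} := by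
    filter_upwards [hevsupp] with i hi
    exact ⟨lam (φ i), hlam0 _, fun j hj => hi j (by simpa [hJf] using hj), rfl⟩
  have hwstar := hclosed.mem_of_tendsto hWconv hWcone
  obtain ⟨μs, hμ0, hμsupp, hμsum⟩ := hwstar
  refine ⟨WithLp.toLp 2 μs, hμ0, ?_, ?_⟩
  · intro j hj
    exact hμsupp j (by simp [hJf, hj.ne])
  · intro a ha
    have hdV : a - astar ∈ V := hdirmem a ha astar hastarA
    have hFOCi : ∀ i, 0 ≤ ⟪c, a - aa (φ i)⟫ + ⟪Wv (φ i), a - aa (φ i)⟫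
        + 2 * ⟪aa (φ i) - astar, a - aa (φ i)⟫ := by
      intro i
      have h1 := hFOC (φ i) a ha
      have h2 := hprojinner (lam (φ i)) (a - aa (φ i)) (hdirmem a ha _ (haaA (φ i)))
      simp only [hWv]
      rw [h2]
      exact h1
    have hlim : Tendsto (fun i => ⟪c, a - aa (φ i)⟫ + ⟪Wv (φ i), a - aa (φ i)⟫
        + 2 * ⟪aa (φ i) - astar, a - aa (φ i)⟫) atTop
        (𝓝 (⟪c, a - astar⟫ + ⟪wstar, a - astar⟫ + 2 * ⟪astar - astar, a - astar⟫)) := by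
      refine Tendsto.add (Tendsto.add ?_ ?_) ?_
      · exact Tendsto.inner tendsto_const_nhds (tendsto_const_nhds.sub haaconv)
      · exact Tendsto.inner hWconv (tendsto_const_nhds.sub haaconv)
      · exact (Tendsto.inner (haaconv.sub tendsto_const_nhds)
          (tendsto_const_nhds.sub haaconv)).const_mul 2
    have h0 : 0 ≤ ⟪c, a - astar⟫ + ⟪wstar, a - astar⟫ + 2 * ⟪astar - astar, a - astar⟫ :=
      le_of_tendsto_of_tendsto' tendsto_const_nhds hlim (fun i => hFOCi i)
    rw [sub_self] at h0
    rw [inner_zero_left] at h0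
    have hw2 : ⟪wstar, a - astar⟫ = ⟪mulVecE K.transpose (WithLp.toLp 2 μs), a - astar⟫ := by
      rw [← hμsum, hprojinner μs _ hdV, ← inner_mulVecE, inner_eq_sum]
    rw [inner_add_left]
    linarith [h0, hw2]
/-- under compactness, convexity, continuity and a relative-interior
feasibility condition, every solution of `VI(M, A ∩ C)` admits a multiplier `λ* ∈ ℝⁿ₊`
with complementarity such that `(a*, λ*)` solves `VI(W, A × ℝⁿ₊)`. -/

theorem stmt_2 (D n : ℕ)
    (A : Set (EuclideanSpace ℝ (Fin D))) (hAne : A.Nonempty)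
    (hAcomp : IsCompact A) (hAconv : Convex ℝ A)
    (K : Matrix (Fin n) (Fin D) ℝ) (l : EuclideanSpace ℝ (Fin n))
    (M : EuclideanSpace ℝ (Fin D) → EuclideanSpace ℝ (Fin D)) (hM : Continuous M)
    (ahat : EuclideanSpace ℝ (Fin D)) (hahat : ahat ∈ intrinsicInterior ℝ A)
    (hahatC : ∀ j, mulVecE K ahat j ≤ l j)
    (astar : EuclideanSpace ℝ (Fin D)) (hastarA : astar ∈ A)
    (hastarC : ∀ j, mulVecE K astar j ≤ l j)
    (hVI : ∀ a ∈ A, (∀ j, mulVecE K a j ≤ l j) → 0 ≤ ⟪M astar, a - astar⟫) :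
    ∃ lstar : EuclideanSpace ℝ (Fin n), (∀ j, 0 ≤ lstar j) ∧
      ⟪lstar, mulVecE K astar - l⟫ = (0 : ℝ) ∧
      (∀ a ∈ A, ∀ lam : EuclideanSpace ℝ (Fin n), (∀ j, 0 ≤ lam j) →
        0 ≤ ⟪M astar + mulVecE K.transpose lstar, a - astar⟫
            + ⟪l - mulVecE K astar, lam - lstar⟫) := by
  have hahatA : ahat ∈ A := intrinsicInterior_subset hahat
  obtain ⟨lstar, hl0, hlcomp, hlVI⟩ := key_lemma D n A hAne hAcomp hAconv K l (M astar)
    ahat hahatA (relint_ball hahat) hahatC astar hastarA hastarC hVI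
  have hsubapp : ∀ (x y : EuclideanSpace ℝ (Fin n)) (j : Fin n), (x - y) j = x j - y j :=
    fun x y j => rfl
  have hcompl : ⟪lstar, mulVecE K astar - l⟫ = (0:ℝ) := by
    rw [inner_eq_sum]
    refine Finset.sum_eq_zero fun j _ => ?_
    rcases lt_or_eq_of_le (hastarC j) with h | h
    · rw [hlcomp j h, zero_mul]
    · rw [hsubapp, h, sub_self, mul_zero]
  refine ⟨lstar, hl0, hcompl, ?_⟩
  intro a ha lam hlam
  have h1 := hlVI a ha
  have ha' : ⟪l - mulVecE K astar, lstar⟫ = (0:ℝ) := by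
    rw [real_inner_comm, show l - mulVecE K astar = -(mulVecE K astar - l) by abel,
      inner_neg_right, hcompl, neg_zero]
  have hb' : 0 ≤ ⟪l - mulVecE K astar, lam⟫ := by
    rw [inner_eq_sum]
    refine Finset.sum_nonneg fun j _ => ?_
    rw [hsubapp]
    exact mul_nonneg (sub_nonneg.2 (hastarC j)) (hlam j)
  have h2 : 0 ≤ ⟪l - mulVecE K astar, lam - lstar⟫ := by
    rw [inner_sub_right, ha', sub_zero]
    exact hb'
  linarith [h1, h2]
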